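/- arXiv:1204.1202 — 6 statements merged into one kernel-verified Lean document; each statement's English description precedes it below -/
import Mathlib

section
/- Let k ≥ 1, d ≥ 1 and set n = (k-1)d + 1. For every family of colour classes z : Fin n → Fin k → ℝ^d (each class consisting of k points), there exists σ : Fin n → Equiv.Perm (Fin k) encoding a colourful k-partition, together with coefficients α : Fin n → ℝ with α j ≥ 0 for all j and ∑ j, α j = 1, such that the point ∑ j, α j • z j (σ j i) is the same for all i ∈ Fin k. In other words, the convex hulls of the k colourful sets intersect with equal coefficients. -/
open Finset Module Set RealInnerProductSpace

/-!
Following Sarkaria, record for every colour class `j` and every permutation `π` the differences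
`v j π = (z j (π i) - z j (π i₀))_{i ≠ i₀}`, a point of a space of dimension `(k - 1) d < n`.
Averaging over `π` puts `0` in the convex hull of each class `{v j π}_π`, so the colourful
Carathéodory theorem selects one `σ j` per class with `0 = ∑ j, α j • v j (σ j)`; these `α` are the
equal coefficients.

Colourful Carathéodory (Bárány): choose a transversal whose convex hull is nearest to `0`, with
nearest point `p`. If `p ≠ 0`, then `p` is a positive combination of affinely independent chosen
points on the supporting hyperplane `⟪p, ·⟫ = ‖p‖ ^ 2`, hence of at most `dim` of them. Some colour
is then unused, and replacing its point by one with `⟪p, x⟫ ≤ 0` gives a hull closer to `0`.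
-/

theorem convexHull_range_eq_image_stdSimplex {R E ι : Type*} [Field R] [LinearOrder R]
    [IsStrictOrderedRing R] [AddCommGroup E] [Module R E] [Fintype ι] (f : ι → E) :
    convexHull R (range f) = (fun w : ι → R => ∑ i, w i • f i) '' stdSimplex R ι := by
  classical
  have hf : range f = Fintype.linearCombination R f '' range fun i => Pi.single i 1 := by
    rw [← range_comp]
    congr 1
    ext i
    simp [Fintype.linearCombination_apply, Pi.single_apply]
  rw [hf, ← LinearMap.image_convexHull, convexHull_rangle_single_eq_stdSimplex]
  rfl

theorem AffineIndependent.card_le_finrank_of_forall_apply_eq {k E ι : Type*} [Field k]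
    [AddCommGroup E] [Module k E] [FiniteDimensional k E] [Fintype ι] {z : ι → E}
    (hz : AffineIndependent k z) {ℓ : Module.Dual k E} (hℓ : ℓ ≠ 0) {c : k}
    (hc : ∀ i, ℓ (z i) = c) : Fintype.card ι ≤ finrank k E := by
  have hspan : vectorSpan k (range z) ≤ LinearMap.ker ℓ := by
    rw [vectorSpan_def, Submodule.span_le]
    rintro _ ⟨_, ⟨i, rfl⟩, _, ⟨j, rfl⟩, rfl⟩
    simp [hc]
  have := Submodule.finrank_mono hspan
  have := hz.card_le_finrank_succ
  have := Module.Dual.finrank_ker_add_one_of_ne_zero hℓ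
  omega

theorem exists_mem_apply_nonpos_of_zero_mem_convexHull {E : Type*} [AddCommGroup E]
    [Module ℝ E] (ℓ : E →ₗ[ℝ] ℝ) {S : Set E} (h0 : (0 : E) ∈ convexHull ℝ S) :
    ∃ x ∈ S, ℓ x ≤ 0 := by
  by_contra! h
  have : (0 : ℝ) < ℓ 0 := convexHull_min h (convex_halfSpace_gt ℓ.isLinear 0) h0
  simp at this

theorem Equiv.Perm.sum_apply_eq {κ M : Type*} [Fintype κ] [DecidableEq κ] [AddCommMonoid M]
    (g : κ → M) (a b : κ) : ∑ π : Perm κ, g (π a) = ∑ π : Perm κ, g (π b) := by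
  simpa using Equiv.sum_comp (Equiv.mulRight (Equiv.swap a b)) fun π => g (π b)

theorem zero_mem_convexHull_range_of_sum_eq_zero {E ι : Type*} [AddCommGroup E] [Module ℝ E]
    [Fintype ι] [Nonempty ι] {v : ι → E} (hv : ∑ i, v i = 0) :
    (0 : E) ∈ convexHull ℝ (range v) := by
  rw [convexHull_range_eq_image_stdSimplex]
  refine ⟨fun _ => (Fintype.card ι : ℝ)⁻¹, ⟨fun _ => by positivity, ?_⟩, ?_⟩
  · simp
  · simp [← smul_sum, hv]

theorem norm_sq_le_inner_of_forall_norm_le {E : Type*} [NormedAddCommGroup E]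
    [InnerProductSpace ℝ E] {K : Set E} (hK : Convex ℝ K) {p : E} (hp : p ∈ K)
    (hmin : ∀ q ∈ K, ‖p‖ ≤ ‖q‖) {w : E} (hw : w ∈ K) : ‖p‖ ^ 2 ≤ ⟪p, w⟫ := by
  have hinf : ‖0 - p‖ = ⨅ q : K, ‖0 - (q : E)‖ := by
    have : Nonempty K := ⟨⟨p, hp⟩⟩
    have hbdd : BddBelow (range fun q : K => ‖0 - (q : E)‖) := ⟨0, by rintro _ ⟨q, rfl⟩; positivity⟩
    exact le_antisymm (le_ciInf fun q => by simpa using hmin q q.2) (ciInf_le hbdd ⟨p, hp⟩)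
  have := (norm_eq_iInf_iff_real_inner_le_zero hK hp).mp hinf w hw
  rw [zero_sub, inner_neg_left, inner_sub_right, real_inner_self_eq_norm_sq] at this
  linarith

theorem innerₛₗ_ne_zero {E : Type*} [NormedAddCommGroup E] [InnerProductSpace ℝ E] {p : E}
    (hp : p ≠ 0) : innerₛₗ ℝ p ≠ 0 := by
  intro h
  simpa [hp] using LinearMap.congr_fun h p

theorem exists_card_le_finrank_mem_convexHull_image {E ι : Type*} [NormedAddCommGroup E]
    [InnerProductSpace ℝ E] [FiniteDimensional ℝ E] {f : ι → E} {p : E} (hp0 : p ≠ 0)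
    (hp : p ∈ convexHull ℝ (range f)) (hsupp : ∀ w ∈ convexHull ℝ (range f), ‖p‖ ^ 2 ≤ ⟪p, w⟫) :
    ∃ s : Finset ι, #s ≤ finrank ℝ E ∧ p ∈ convexHull ℝ (f '' s) := by
  classical
  obtain ⟨κ, _, y, w, hyf, hy, hw0, hw1, hwp⟩ := eq_pos_convex_span_of_mem_convexHull hp
  have hy_le (i : κ) : ‖p‖ ^ 2 ≤ ⟪p, y i⟫ := hsupp _ (subset_convexHull ℝ _ (hyf ⟨i, rfl⟩))
  have hy_eq (i : κ) : ⟪p, y i⟫ = ‖p‖ ^ 2 := by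
    have hsum : ∑ i, w i * (⟪p, y i⟫ - ‖p‖ ^ 2) = 0 := by
      simp only [mul_sub, sum_sub_distrib, ← sum_mul, hw1, one_mul, ← real_inner_smul_right,
        ← inner_sum, hwp, real_inner_self_eq_norm_sq, sub_self]
    have := (sum_eq_zero_iff_of_nonneg fun i _ =>
      mul_nonneg (hw0 i).le (sub_nonneg.2 (hy_le i))).1 hsum i (mem_univ i)
    linarith [(mul_eq_zero.1 this).resolve_left (hw0 i).ne']
  have hcard : Fintype.card κ ≤ finrank ℝ E :=
    hy.card_le_finrank_of_forall_apply_eq (innerₛₗ_ne_zero hp0) hy_eq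
  choose u hu using fun i => hyf ⟨i, rfl⟩
  have hyu : range y ⊆ f '' (univ.image u : Finset ι) := by
    rintro _ ⟨i, rfl⟩
    exact ⟨u i, by simp, hu i⟩
  have hpy : p ∈ convexHull ℝ (range y) := by
    rw [convexHull_range_eq_image_stdSimplex]
    exact ⟨w, ⟨fun i => (hw0 i).le, hw1⟩, hwp⟩
  exact ⟨univ.image u, card_image_le.trans hcard, convexHull_mono hyu hpy⟩

theorem exists_colourful_convexHull_min_norm {E ι : Type*} [NormedAddCommGroup E]
    [NormedSpace ℝ E] [Fintype ι] [Nonempty ι] {S : ι → Set E} (hS : ∀ j, (S j).Finite)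
    (hne : ∀ j, (S j).Nonempty) :
    ∃ f : ι → E, (∀ j, f j ∈ S j) ∧ ∃ p ∈ convexHull ℝ (range f),
      ∀ g : ι → E, (∀ j, g j ∈ S j) → ∀ q ∈ convexHull ℝ (range g), ‖p‖ ≤ ‖q‖ := by
  choose x hx using hne
  obtain ⟨f, hfS, hfmin⟩ := Set.exists_min_image (univ.pi S)
    (fun f => Metric.infDist 0 (convexHull ℝ (range f))) (Set.Finite.pi hS) ⟨x, fun j _ => hx j⟩
  obtain ⟨p, hpf, hpd⟩ := ((finite_range f).isCompact_convexHull (𝕜 := ℝ)).exists_infDist_eq_dist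
    (convexHull_nonempty_iff.2 (range_nonempty f)) 0
  refine ⟨f, fun j => hfS j (mem_univ j), p, hpf, fun g hgS q hq => ?_⟩
  calc ‖p‖ = Metric.infDist 0 (convexHull ℝ (range f)) := by simp [hpd]
    _ ≤ Metric.infDist 0 (convexHull ℝ (range g)) := hfmin g fun j _ => hgS j
    _ ≤ ‖q‖ := by simpa using Metric.infDist_le_dist_of_mem hq (x := 0)

theorem colourful_caratheodory_of_innerProductSpace {E ι : Type*} [NormedAddCommGroup E]
    [InnerProductSpace ℝ E] [FiniteDimensional ℝ E] [Fintype ι]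
    (hι : finrank ℝ E < Fintype.card ι) {S : ι → Set E} (hS : ∀ j, (S j).Finite)
    (h0 : ∀ j, (0 : E) ∈ convexHull ℝ (S j)) :
    ∃ f : ι → E, (∀ j, f j ∈ S j) ∧ (0 : E) ∈ convexHull ℝ (range f) := by
  classical
  have : Nonempty ι := Fintype.card_pos_iff.mp (by omega)
  obtain ⟨f, hfS, p, hpf, hmin⟩ := exists_colourful_convexHull_min_norm hS
    fun j => convexHull_nonempty_iff.mp ⟨0, h0 j⟩
  refine ⟨f, hfS, ?_⟩
  by_contra h0f
  have hp0 : p ≠ 0 := fun hp => h0f (hp ▸ hpf)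
  obtain ⟨s, hs, hps⟩ := exists_card_le_finrank_mem_convexHull_image hp0 hpf
    fun w => norm_sq_le_inner_of_forall_norm_le (convex_convexHull ℝ _) hpf (hmin f hfS)
  obtain ⟨j₀, hj₀⟩ : ∃ j₀, j₀ ∉ s := by
    by_contra! h
    exact (Finset.card_le_card fun j _ => h j).not_gt (hs.trans_lt hι)
  obtain ⟨x, hxS, hx⟩ := exists_mem_apply_nonpos_of_zero_mem_convexHull (innerₛₗ ℝ p) (h0 j₀)
  set g := Function.update f j₀ x
  have hgS (j : ι) : g j ∈ S j := by
    rcases eq_or_ne j j₀ with rfl | hj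
    · simpa [g] using hxS
    · simpa [g, hj] using hfS j
  have hpg : p ∈ convexHull ℝ (range g) := by
    refine convexHull_mono ?_ hps
    rintro _ ⟨j, hj, rfl⟩
    exact ⟨j, Function.update_of_ne (ne_of_mem_of_not_mem hj hj₀) _ _⟩
  have hxg : x ∈ convexHull ℝ (range g) := subset_convexHull ℝ _ ⟨j₀, Function.update_self ..⟩
  have hp_sq : ‖p‖ ^ 2 ≤ 0 :=
    (norm_sq_le_inner_of_forall_norm_le (convex_convexHull ℝ _) hpg (hmin g hgS) hxg).trans hx
  exact hp0 (by simpa using hp_sq)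

theorem colourful_caratheodory {E ι : Type*} [AddCommGroup E] [Module ℝ E] [FiniteDimensional ℝ E]
    [Fintype ι] (hι : finrank ℝ E < Fintype.card ι) {S : ι → Set E} (hS : ∀ j, (S j).Finite)
    (h0 : ∀ j, (0 : E) ∈ convexHull ℝ (S j)) :
    ∃ f : ι → E, (∀ j, f j ∈ S j) ∧ (0 : E) ∈ convexHull ℝ (range f) := by
  let e := LinearEquiv.ofFinrankEq E (EuclideanSpace ℝ (Fin (finrank ℝ E)))
    finrank_euclideanSpace_fin.symm
  obtain ⟨f, hfS, hf0⟩ := colourful_caratheodory_of_innerProductSpace (S := fun j => e '' S j)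
    (by rwa [finrank_euclideanSpace_fin]) (fun j => (hS j).image e)
    fun j => by
      rw [← LinearEquiv.coe_coe, ← LinearMap.image_convexHull]
      exact ⟨0, h0 j, map_zero e⟩
  refine ⟨fun j => e.symm (f j), fun j => ?_, ?_⟩
  · obtain ⟨x, hx, hxf⟩ := hfS j
    simpa [← hxf] using hx
  · rw [range_comp', ← LinearEquiv.coe_coe, ← LinearMap.image_convexHull]
    exact ⟨0, hf0, map_zero _⟩

theorem exists_colourful_partition_equal_coefficients {V ι κ : Type*} [AddCommGroup V]
    [Module ℝ V] [FiniteDimensional ℝ V] [Fintype ι] [Fintype κ] [Nonempty κ]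
    (h : (Fintype.card κ - 1) * finrank ℝ V < Fintype.card ι) (z : ι → κ → V) :
    ∃ (σ : ι → Equiv.Perm κ) (α : ι → ℝ), (∀ j, 0 ≤ α j) ∧ ∑ j, α j = 1 ∧
      ∀ i i', ∑ j, α j • z j (σ j i) = ∑ j, α j • z j (σ j i') := by
  classical
  obtain ⟨i₀⟩ := ‹Nonempty κ›
  let v (j : ι) (π : Equiv.Perm κ) (i : {i // i ≠ i₀}) : V := z j (π i) - z j (π i₀)
  have hdim : finrank ℝ ({i // i ≠ i₀} → V) < Fintype.card ι := by
    simpa [Module.finrank_pi_fintype, Fintype.card_subtype_compl] using h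
  have hv0 (j : ι) : (0 : {i // i ≠ i₀} → V) ∈ convexHull ℝ (range (v j)) := by
    refine zero_mem_convexHull_range_of_sum_eq_zero (funext fun i => ?_)
    simp [v, sum_sub_distrib, Equiv.Perm.sum_apply_eq (z j) (i : κ) i₀]
  obtain ⟨f, hfv, hf0⟩ := colourful_caratheodory hdim (fun j => finite_range (v j)) hv0
  choose σ hσ using hfv
  rw [convexHull_range_eq_image_stdSimplex] at hf0
  obtain ⟨α, ⟨hα0, hα1⟩, hαf⟩ := hf0
  refine ⟨σ, α, hα0, hα1, ?_⟩
  have hbase (i : κ) : ∑ j, α j • z j (σ j i) = ∑ j, α j • z j (σ j i₀) := by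
    rcases eq_or_ne i i₀ with rfl | hi
    · rfl
    simpa [← hσ, v, smul_sub, sum_sub_distrib, sub_eq_zero] using congr_fun hαf ⟨i, hi⟩
  exact fun i i' => (hbase i).trans (hbase i').symm

theorem equal_coefficients_coloured_tverberg_general (k d : ℕ) (hk : 1 ≤ k)
    (z : Fin ((k - 1) * d + 1) → Fin k → (Fin d → ℝ)) :
    ∃ (σ : Fin ((k - 1) * d + 1) → Equiv.Perm (Fin k))
      (α : Fin ((k - 1) * d + 1) → ℝ),
      (∀ j, 0 ≤ α j) ∧ (∑ j, α j = 1) ∧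
      ∀ i i' : Fin k, ∑ j, α j • z j (σ j i) = ∑ j, α j • z j (σ j i') := by
  have : Nonempty (Fin k) := ⟨⟨0, hk⟩⟩
  exact exists_colourful_partition_equal_coefficients (by simp) z

/-- Equal-coefficients coloured Tverberg theorem: with `n = (k-1)d + 1` colour
classes of `k` points each in `ℝ^d`, there is a colourful `k`-partition whose
convex hulls intersect with equal coefficients. -/
theorem equal_coefficients_coloured_tverberg (k d : ℕ) (hk : 1 ≤ k) (hd : 1 ≤ d)
    (z : Fin ((k - 1) * d + 1) → Fin k → (Fin d → ℝ)) :
    ∃ (σ : Fin ((k - 1) * d + 1) → Equiv.Perm (Fin k))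
      (α : Fin ((k - 1) * d + 1) → ℝ),
      (∀ j, 0 ≤ α j) ∧ (∑ j, α j = 1) ∧
      ∀ i i' : Fin k, ∑ j, α j • z j (σ j i) = ∑ j, α j • z j (σ j i') :=
  equal_coefficients_coloured_tverberg_general k d hk z
end

section
/- Let k ≥ 2, d ≥ 1, and let n be an integer with 1 ≤ n ≤ (k-1)d. Then for every t ≥ k there exists a family of colour classes z : Fin n → Fin t → ℝ^d, with z j injective for each j, such that there is NO σ : Fin n → (Fin k ↪ Fin t) and NO coefficients α : Fin n → ℝ with α j ≥ 0 and ∑ j, α j = 1 for which the point ∑ j, α j • z j (σ j i) is independent of i ∈ Fin k. That is, with fewer than (k-1)d + 1 colour classes, the equal-coefficients coloured Tverberg theorem fails regardless of the number of points per class. -/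
/-!
Put colour class `(c, q)`, for `c < d` and `q < k - 1`, on the `c`-th coordinate axis at the
heights `2 ^ (t ^ q * p)`, `p < t`, and keep `n ≤ (k - 1) d` of these classes. On axis `c`, an
equal-coefficient point would make the all-ones vector and the vectors `(2 ^ (t ^ q * σ_q(i)))_i`
of the at most `k - 1` classes on that axis linearly dependent. They are not: in the determinant
of the square matrix they form on `k` columns, each permutation contributes `±2^e` with `e` a
base-`t` number whose digits determine the permutation, so the exponents are distinct and the
least power of two cannot cancel. Hence all coefficients vanish, contradicting `∑ α = 1`.
-/

open Function Finset Matrix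

theorem Nat.ofDigits_ofFn (b : ℕ) {m : ℕ} (a : Fin m → ℕ) :
    Nat.ofDigits b (List.ofFn a) = ∑ u : Fin m, b ^ (u : ℕ) * a u := by
  induction m with
  | zero => simp
  | succ m ih =>
    rw [List.ofFn_succ, Nat.ofDigits_cons, ih, Fin.sum_univ_succ, mul_sum]
    simp [pow_succ, mul_comm, mul_left_comm]

theorem Nat.eq_of_sum_pow_mul_eq {b m : ℕ} (hb : 1 < b) {a a' : Fin m → ℕ}
    (ha : ∀ u, a u < b) (ha' : ∀ u, a' u < b)
    (h : ∑ u : Fin m, b ^ (u : ℕ) * a u = ∑ u : Fin m, b ^ (u : ℕ) * a' u) : a = a' :=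
  List.ofFn_injective <| Nat.ofDigits_inj_of_len_eq hb (by simp)
    (by simpa [List.mem_ofFn] using ha) (by simpa [List.mem_ofFn] using ha')
    (by rwa [Nat.ofDigits_ofFn, Nat.ofDigits_ofFn])

theorem Equiv.Perm.eq_of_forall_ne_apply_eq {α : Type*} {f g : Equiv.Perm α} (a : α)
    (h : ∀ x, x ≠ a → f x = g x) : f = g := by
  refine Equiv.ext fun x => ?_
  by_cases hx : x = a
  · subst hx
    obtain ⟨y, hy⟩ := f.surjective (g x)
    by_cases hy' : y = x
    · rw [← hy, hy']
    · exact absurd (g.injective (hy.symm.trans (h y hy'))) (Ne.symm hy')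
  · exact h x hx

theorem sum_units_mul_pow_ne_zero {ι R : Type*} [Fintype ι] [Nonempty ι] [CommRing R]
    [IsDomain R] {b : R} (hb₀ : b ≠ 0) (hb : ¬IsUnit b) (ε : ι → Rˣ) {F : ι → ℕ}
    (hF : Injective F) : ∑ i, (ε i : R) * b ^ F i ≠ 0 := by
  classical
  -- only the term of least exponent fails to be divisible by `b ^ (F i₀ + 1)`
  obtain ⟨i₀, hi₀⟩ := Finite.exists_min F
  have hrest : b ^ (F i₀ + 1) ∣ ∑ i ∈ univ.erase i₀, (ε i : R) * b ^ F i := by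
    refine dvd_sum fun i hi => Dvd.dvd.mul_left (pow_dvd_pow b ?_) _
    exact lt_of_le_of_ne (hi₀ i) fun h => (mem_erase.mp hi).1 (hF h).symm
  intro hsum
  rw [← Finset.add_sum_erase _ _ (mem_univ i₀)] at hsum
  have hlead : b ^ (F i₀ + 1) ∣ (ε i₀ : R) * b ^ F i₀ :=
    (dvd_add_left hrest).mp (hsum ▸ dvd_zero _)
  exact absurd ((pow_dvd_pow_iff hb₀ hb).mp (Units.dvd_mul_left.mp hlead)) (by omega)

theorem Matrix.det_of_pow_ne_zero {n R : Type*} [Fintype n] [DecidableEq n] [CommRing R]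
    [CharZero R] {b : ℤ} (hb₀ : b ≠ 0) (hb : ¬IsUnit b) (g : n → n → ℕ)
    (hg : Injective fun τ : Equiv.Perm n => ∑ i, g i (τ i)) :
    (of fun i j => (b : R) ^ g i j).det ≠ 0 := by
  have hdet : (of fun i j => (b : R) ^ g i j).det
      = ((∑ τ : Equiv.Perm n, (Equiv.Perm.sign τ : ℤ) * b ^ ∑ i, g i (τ i) : ℤ) : R) := by
    rw [← det_transpose, det_apply]
    push_cast
    refine sum_congr rfl fun τ _ => ?_
    rw [Units.smul_def, zsmul_eq_mul]
    simp [prod_pow_eq_pow_sum]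
  rw [hdet, Int.cast_ne_zero]
  exact sum_units_mul_pow_ne_zero hb₀ hb _ hg

theorem injective_sum_perm_vecCons_pow_mul {t m : ℕ} (ht : 1 < t) (a : Fin m → Fin (m + 1) → ℕ)
    (ha_lt : ∀ u v, a u v < t) (ha_inj : ∀ u, Injective (a u)) :
    Injective fun τ : Equiv.Perm (Fin (m + 1)) =>
      ∑ i, vecCons (fun _ => 0) (fun u v => t ^ (u : ℕ) * a u v) i (τ i) := by
  intro τ τ' h
  simp only [Fin.sum_univ_succ, cons_val_zero, cons_val_succ, zero_add] at h
  have hdigits := Nat.eq_of_sum_pow_mul_eq ht (fun u => ha_lt u _) (fun u => ha_lt u _) h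
  exact Equiv.Perm.eq_of_forall_ne_apply_eq 0 fun x hx => by
    obtain ⟨u, rfl⟩ := Fin.exists_succ_eq.mpr hx
    exact ha_inj u (congrFun hdigits u)

theorem eq_zero_of_forall_sum_mul_two_pow_eq {m k t : ℕ} (hmk : m < k)
    (σ : Fin m → (Fin k ↪ Fin t)) (β : Fin m → ℝ)
    (h : ∀ i i', ∑ u, β u * 2 ^ (t ^ (u : ℕ) * σ u i) = ∑ u, β u * 2 ^ (t ^ (u : ℕ) * σ u i')) :
    β = 0 := by
  rcases Nat.eq_zero_or_pos m with rfl | hm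
  · exact Subsingleton.elim _ _
  have ht : 1 < t := by
    have := Fintype.card_le_of_embedding (σ ⟨0, hm⟩)
    simp only [Fintype.card_fin] at this
    omega
  set col : Fin (m + 1) → Fin k := Fin.castLE hmk
  -- row `0` is the all-ones row `2 ^ 0`, which absorbs the common value `s`
  set g : Fin (m + 1) → Fin (m + 1) → ℕ :=
    vecCons (fun _ => 0) fun u v => t ^ (u : ℕ) * σ u (col v)
  have hdet := Matrix.det_of_pow_ne_zero (R := ℝ) (b := 2) two_ne_zero (by decide) g
    (injective_sum_perm_vecCons_pow_mul ht _ (fun u v => (σ u (col v)).2)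
      fun u => Fin.val_injective.comp ((σ u).injective.comp (Fin.castLE_injective hmk)))
  set s := ∑ u, β u * 2 ^ (t ^ (u : ℕ) * σ u (col 0))
  have hker : vecMul (vecCons (-s) β) (of fun i j => ((2 : ℤ) : ℝ) ^ g i j) = 0 := by
    funext v
    simp [vecMul, dotProduct, Fin.sum_univ_succ, g, s, h (col v) (col 0)]
  simpa using congrArg vecTail (eq_zero_of_vecMul_eq_zero hdet hker)

def HasEqualCoeffTverbergPartition {ι κ E : Type*} [Fintype ι] [AddCommMonoid E] [Module ℝ E]
    (k : ℕ) (z : ι → κ → E) : Prop :=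
  ∃ (σ : ι → (Fin k ↪ κ)) (α : ι → ℝ), (∀ j, 0 ≤ α j) ∧ ∑ j, α j = 1 ∧
    ∀ i i' : Fin k, ∑ j, α j • z j (σ j i) = ∑ j, α j • z j (σ j i')

theorem HasEqualCoeffTverbergPartition.of_comp_embedding {ι ι' κ E : Type*} [Fintype ι]
    [Fintype ι'] [AddCommMonoid E] [Module ℝ E] {k : ℕ} {z : ι' → κ → E} (e : ι ↪ ι')
    (h : HasEqualCoeffTverbergPartition k fun j => z (e j)) :
    HasEqualCoeffTverbergPartition k z := by
  obtain ⟨σ, α, hα₀, hα₁, hσα⟩ := h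
  obtain ⟨j₀⟩ : Nonempty ι := by
    by_contra hι
    simp [not_nonempty_iff.mp hι] at hα₁
  have hα' : ∀ x ∉ Set.range e, extend e α 0 x = 0 := fun x hx =>
    extend_apply' _ _ _ (by simpa using hx)
  refine ⟨extend e σ fun _ => σ j₀, extend e α 0, fun x => ?_, ?_, fun i i' => ?_⟩
  · by_cases hx : x ∈ Set.range e
    · obtain ⟨j, rfl⟩ := hx
      simpa [e.injective.extend_apply] using hα₀ j
    · exact (hα' x hx).ge
  · rw [← hα₁]
    exact (Fintype.sum_of_injective e e.injective _ _ hα'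
      fun j => (e.injective.extend_apply _ _ _).symm).symm
  · have hsum : ∀ i, ∑ j, α j • z (e j) (σ j i)
        = ∑ x, extend e α 0 x • z x (extend e σ (fun _ => σ j₀) x i) := fun i =>
      Fintype.sum_of_injective e e.injective _ _ (fun x hx => by simp [hα' x hx])
        fun j => by simp [e.injective.extend_apply]
    rw [← hsum, ← hsum, hσα]

def towerClasses (d m t : ℕ) (x : Fin d × Fin m) (p : Fin t) : Fin d → ℝ :=
  Pi.single x.1 (2 ^ (t ^ (x.2 : ℕ) * p))

theorem towerClasses_injective {d m t : ℕ} (x : Fin d × Fin m) :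
    Injective (towerClasses d m t x) := by
  intro p p' h
  have hval : (p : ℕ) = p' ∨ t = 0 ∧ (x.2 : ℕ) ≠ 0 := by
    simpa [towerClasses] using congrFun h x.1
  rcases hval with hval | ⟨rfl, -⟩
  exacts [Fin.ext hval, p.elim0]

theorem not_hasEqualCoeffTverbergPartition_towerClasses {d m k t : ℕ} (hmk : m < k) :
    ¬ HasEqualCoeffTverbergPartition k (towerClasses d m t) := by
  rintro ⟨σ, α, -, hα₁, hσα⟩
  have hzero : ∀ c q, α (c, q) = 0 := fun c =>
    congrFun (eq_zero_of_forall_sum_mul_two_pow_eq hmk (fun q => σ (c, q)) (fun q => α (c, q))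
      fun i i' => by
        simpa [towerClasses, Fintype.sum_prod_type, Pi.single_apply] using congrFun (hσα i i') c)
  simp [hzero] at hα₁

theorem equal_coefficients_coloured_tverberg_optimal_general (k d n t : ℕ)
    (hk : 2 ≤ k) (hn2 : n ≤ (k - 1) * d) :
    ∃ z : Fin n → Fin t → (Fin d → ℝ),
      (∀ j, Function.Injective (z j)) ∧
      ¬ ∃ (σ : Fin n → (Fin k ↪ Fin t)) (α : Fin n → ℝ),
        (∀ j, 0 ≤ α j) ∧ (∑ j, α j = 1) ∧
        ∀ i i' : Fin k, ∑ j, α j • z j (σ j i) = ∑ j, α j • z j (σ j i') := by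
  obtain ⟨e⟩ : Nonempty (Fin n ↪ Fin d × Fin (k - 1)) :=
    Embedding.nonempty_of_card_le (by simpa [mul_comm] using hn2)
  exact ⟨fun j => towerClasses d (k - 1) t (e j), fun j => towerClasses_injective (e j),
    fun h => not_hasEqualCoeffTverbergPartition_towerClasses (by omega)
      (HasEqualCoeffTverbergPartition.of_comp_embedding e h)⟩

/-- Optimality: with `n ≤ (k-1)d` colour classes, the equal-coefficients coloured
Tverberg theorem fails regardless of the number `t ≥ k` of points per class. -/
theorem equal_coefficients_coloured_tverberg_optimal (k d n t : ℕ)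
    (hk : 2 ≤ k) (hd : 1 ≤ d) (hn1 : 1 ≤ n) (hn2 : n ≤ (k - 1) * d) (ht : k ≤ t) :
    ∃ z : Fin n → Fin t → (Fin d → ℝ),
      (∀ j, Function.Injective (z j)) ∧
      ¬ ∃ (σ : Fin n → (Fin k ↪ Fin t)) (α : Fin n → ℝ),
        (∀ j, 0 ≤ α j) ∧ (∑ j, α j = 1) ∧
        ∀ i i' : Fin k, ∑ j, α j • z j (σ j i) = ∑ j, α j • z j (σ j i') :=
  equal_coefficients_coloured_tverberg_optimal_general k d n t hk hn2
end

section
/- (Coloured Radon theorem, equal-coefficients form.) Given d+1 pairs of points in ℝ^d, encoded as x, y : Fin (d+1) → ℝ^d (the j-th pair being {x j, y j}), there exist a choice ε : Fin (d+1) → Bool and coefficients α : Fin (d+1) → ℝ with α j ≥ 0 for all j and ∑ j, α j = 1 such that ∑ j, α j • a j = ∑ j, α j • b j, where (a j, b j) = (x j, y j) if ε j = true and (a j, b j) = (y j, x j) otherwise. In particular, the pairs can be split into two disjoint colourful sets whose convex hulls intersect. -/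
/-!
The `d + 1` differences `x j - y j` are linearly dependent in `ℝ^d`; fix a nontrivial relation
`∑ j, g j • (x j - y j) = 0`. Put `x j` on the first side exactly when `g j ≥ 0` and take
`α j = |g j| / ∑ i, |g i|`. Then `α j • (a j - b j) = g j • (x j - y j) / ∑ i, |g i|`, so the
difference of the two colourful combinations is a multiple of the relation, i.e. zero.
-/

section

variable {ι 𝕜 E : Type*} [Field 𝕜] [LinearOrder 𝕜] [IsStrictOrderedRing 𝕜]
  [AddCommGroup E] [Module 𝕜 E]

lemma abs_smul_ite_sub_abs_smul_ite (c : 𝕜) (a b : E) :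
    |c| • (if 0 ≤ c then a else b) - |c| • (if 0 ≤ c then b else a) = c • (a - b) := by
  rw [← smul_sub]
  by_cases hc : 0 ≤ c
  · rw [if_pos hc, if_pos hc, abs_of_nonneg hc]
  · rw [if_neg hc, if_neg hc, abs_of_neg (not_le.mp hc), neg_smul, ← smul_neg, neg_sub]

theorem exists_colourful_equal_coefficients_of_relation [Fintype ι] (x y : ι → E)
    {g : ι → 𝕜} {i : ι} (hgi : g i ≠ 0) (hg : ∑ j, g j • (x j - y j) = 0) :
    ∃ (ε : ι → Bool) (α : ι → 𝕜), (∀ j, 0 ≤ α j) ∧ ∑ j, α j = 1 ∧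
      ∑ j, α j • (if ε j then x j else y j) = ∑ j, α j • (if ε j then y j else x j) := by
  set S := ∑ j, |g j|
  have hS : 0 < S :=
    Finset.sum_pos' (fun j _ => abs_nonneg (g j)) ⟨i, Finset.mem_univ i, abs_pos.mpr hgi⟩
  refine ⟨fun j => decide (0 ≤ g j), fun j => |g j| / S, fun j => by positivity,
    by rw [← Finset.sum_div, div_self hS.ne'], ?_⟩
  rw [← sub_eq_zero, ← Finset.sum_sub_distrib]
  calc ∑ j, ((|g j| / S) • (if decide (0 ≤ g j) then x j else y j)
          - (|g j| / S) • (if decide (0 ≤ g j) then y j else x j))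
      = ∑ j, S⁻¹ • (g j • (x j - y j)) := by
        refine Finset.sum_congr rfl fun j _ => ?_
        simp only [decide_eq_true_eq, div_eq_inv_mul, mul_smul]
        rw [← smul_sub, abs_smul_ite_sub_abs_smul_ite]
    _ = 0 := by rw [← Finset.smul_sum, hg, smul_zero]

end

/-- Coloured Radon theorem, equal-coefficients form: `d+1` pairs of points in
`ℝ^d` can be split into two colourful sets whose convex hulls intersect,
with the same convex coefficients on both sides. -/
theorem coloured_radon_equal_coefficients (d : ℕ)
    (x y : Fin (d + 1) → (Fin d → ℝ)) :
    ∃ (ε : Fin (d + 1) → Bool) (α : Fin (d + 1) → ℝ),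
      (∀ j, 0 ≤ α j) ∧ (∑ j, α j = 1) ∧
      ∑ j, α j • (if ε j then x j else y j) =
        ∑ j, α j • (if ε j then y j else x j) := by
  have hdep : ¬ LinearIndependent ℝ (x - y) := fun h => by
    simpa using h.fintype_card_le_finrank
  obtain ⟨g, hg, i, hgi⟩ := Fintype.not_linearIndependent_iff.mp hdep
  exact exists_colourful_equal_coefficients_of_relation x y hgi hg
end

section
/- Given d+3 points in ℝ^d, encoded as X : Fin (d+3) → ℝ^d, there exist disjoint nonempty index sets A, B ⊆ Fin (d+3) with |A| = |B| such that the convex hulls of {X j : j ∈ A} and {X j : j ∈ B} have a common point. -/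
/-!
The affine dependencies `w` of the points (`∑ w j • X j = 0`, `∑ w j = 0`) form a space of
dimension at least `(d + 3) - (d + 1) = 2`, so its nonzero elements form a connected set. Inside
it, the dependencies with more than half of their coordinates positive and those with more than
half negative are two disjoint open sets exchanged by `w ↦ -w`; they cannot cover it, so some
nonzero dependency has at most half of its coordinates of either sign. As in Radon's theorem, the
hulls of its positive and its negative indices meet, and padding the smaller of the two with
indices of weight zero makes them equally large.
-/

open Finset

section PosIndices

variable {ι : Type*} [Fintype ι]

noncomputable def posIndices (w : ι → ℝ) : Finset ι := {j | 0 < w j}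

@[simp]
lemma mem_posIndices {w : ι → ℝ} {j : ι} : j ∈ posIndices w ↔ 0 < w j := by
  simp [posIndices]

lemma disjoint_posIndices_neg (w : ι → ℝ) : Disjoint (posIndices w) (posIndices (-w)) := by
  rw [Finset.disjoint_left]
  intro j hj hj'
  simp only [mem_posIndices, Pi.neg_apply, neg_pos] at hj hj'
  exact hj.not_gt hj'

lemma card_posIndices_add_card_posIndices_neg_le (w : ι → ℝ) :
    #(posIndices w) + #(posIndices (-w)) ≤ Fintype.card ι := by
  classical
  rw [← card_union_of_disjoint (disjoint_posIndices_neg w)]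
  exact card_le_univ _

lemma lowerSemicontinuous_card_posIndices :
    LowerSemicontinuous fun w : ι → ℝ => #(posIndices w) := by
  intro w k hk
  have hpos : ∀ᶠ v in nhds w, ∀ j ∈ posIndices w, 0 < v j :=
    (Filter.eventually_all_finset _).2 fun j hj =>
      (continuous_apply j).continuousAt.eventually (eventually_gt_nhds (mem_posIndices.1 hj))
  filter_upwards [hpos] with v hv
  exact hk.trans_le (card_le_card fun j hj => mem_posIndices.2 (hv j hj))

theorem exists_mem_ne_zero_two_mul_card_posIndices_le (K : Submodule ℝ (ι → ℝ))
    (hK : 1 < Module.rank ℝ K) :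
    ∃ w ∈ K, w ≠ 0 ∧ 2 * #(posIndices w) ≤ Fintype.card ι ∧
      2 * #(posIndices (-w)) ≤ Fintype.card ι := by
  by_contra! hbal
  set n := Fintype.card ι
  let U : Set K := {w | n < 2 * #(posIndices (w : ι → ℝ))}
  let V : Set K := {w | n < 2 * #(posIndices (-w : ι → ℝ))}
  have hopen (k : ℕ) : IsOpen {w : ι → ℝ | k < #(posIndices w)} :=
    lowerSemicontinuous_card_posIndices.isOpen_preimage k
  have hU : IsOpen U := by
    convert (hopen (n / 2)).preimage continuous_subtype_val using 1
    ext w; simp only [U, Set.mem_ofPred_eq, Set.mem_preimage]; omega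
  have hV : IsOpen V := by
    convert (hopen (n / 2)).preimage continuous_subtype_val.neg using 1
    ext w; simp only [V, Set.mem_ofPred_eq, Set.mem_preimage, Pi.neg_apply]; omega
  have hcover : {0}ᶜ ⊆ U ∪ V := fun w hw => by
    have := hbal w w.2 (by simpa using hw)
    by_cases h : 2 * #(posIndices (w : ι → ℝ)) ≤ n
    · exact Or.inr (this h)
    · exact Or.inl (not_le.1 h)
  have hUV : U ∩ V = ∅ := by
    ext w
    simp only [U, V, Set.mem_inter_iff, Set.mem_ofPred_eq, Set.mem_empty_iff_false, iff_false]
    have := card_posIndices_add_card_posIndices_neg_le (w : ι → ℝ)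
    omega
  have hconn := isConnected_compl_singleton_of_one_lt_rank hK (0 : K)
  obtain ⟨u, hu0, huU⟩ : ∃ u : K, u ≠ 0 ∧ u ∈ U := by
    obtain ⟨w, hw⟩ := hconn.nonempty
    rcases hcover hw with hwU | hwV
    · exact ⟨w, hw, hwU⟩
    · exact ⟨-w, neg_ne_zero.2 hw, by simpa [U, V] using hwV⟩
  have huV : -u ∈ V := by simpa [U, V] using huU
  obtain ⟨v, -, hvUV⟩ := hconn.isPreconnected U V hU hV hcover ⟨u, hu0, huU⟩
    ⟨-u, neg_ne_zero.2 hu0, huV⟩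
  simp [hUV] at hvUV

lemma sum_posIndices_add_sum_posIndices_neg {M : Type*} [AddCommMonoid M] (w : ι → ℝ)
    {g : ι → M} (hg : ∀ j, w j = 0 → g j = 0) :
    ∑ j ∈ posIndices w, g j + ∑ j ∈ posIndices (-w), g j = ∑ j, g j := by
  classical
  rw [← sum_union (disjoint_posIndices_neg w)]
  refine sum_subset (subset_univ _) fun j _ hj => hg j ?_
  simp only [mem_union, mem_posIndices, Pi.neg_apply, neg_pos, not_or, not_lt] at hj
  exact le_antisymm hj.1 hj.2

theorem convexHull_posIndices_inter_convexHull_posIndices_neg_nonempty {E : Type*}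
    [AddCommGroup E] [Module ℝ E] (X : ι → E) {w : ι → ℝ} (hw : w ≠ 0)
    (hsum : ∑ j, w j = 0) (hvec : ∑ j, w j • X j = 0) :
    (convexHull ℝ (X '' posIndices w) ∩ convexHull ℝ (X '' posIndices (-w))).Nonempty := by
  have hsplit : ∑ j ∈ posIndices w, w j + ∑ j ∈ posIndices (-w), w j = 0 :=
    (sum_posIndices_add_sum_posIndices_neg w fun _ => id).trans hsum
  have hsplit_vec : ∑ j ∈ posIndices w, w j • X j + ∑ j ∈ posIndices (-w), w j • X j = 0 :=
    (sum_posIndices_add_sum_posIndices_neg w fun j hj => by rw [hj, zero_smul]).trans hvec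
  have hpos : 0 < ∑ j ∈ posIndices w, w j := by
    obtain ⟨j, hj, hwj⟩ := exists_pos_of_sum_zero_of_exists_nonzero w hsum
      (by simpa [funext_iff] using hw)
    exact sum_pos' (fun i hi => (mem_posIndices.1 hi).le) ⟨j, mem_posIndices.2 hwj, hwj⟩
  refine ⟨(posIndices w).centerMass w X, ?_, ?_⟩
  · exact centerMass_mem_convexHull _ (fun i hi => (mem_posIndices.1 hi).le) hpos
      fun i hi => Set.mem_image_of_mem X hi
  · rw [centerMass_of_sum_add_sum_eq_zero hsplit hsplit_vec]
    refine centerMass_mem_convexHull_of_nonpos _ (fun i hi => ?_) (by linarith)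
      fun i hi => Set.mem_image_of_mem X hi
    simpa using (mem_posIndices.1 hi).le

end PosIndices

lemma Finset.exists_superset_disjoint_card_eq {ι : Type*} [Fintype ι] [DecidableEq ι]
    {s t : Finset ι} (hst : Disjoint s t) (hcard : #s ≤ #t)
    (ht : 2 * #t ≤ Fintype.card ι) :
    ∃ u, s ⊆ u ∧ Disjoint u t ∧ #u = #t := by
  obtain ⟨u, hsu, hut, hu⟩ := exists_subsuperset_card_eq (subset_compl_iff_disjoint_right.2 hst)
    hcard (by rw [card_compl]; omega)
  exact ⟨u, hsu, subset_compl_iff_disjoint_right.1 hut, hu⟩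

theorem exists_disjoint_card_eq_of_affine_dependency {ι E : Type*} [Fintype ι]
    [AddCommGroup E] [Module ℝ E] (X : ι → E) {w : ι → ℝ} (hw : w ≠ 0)
    (hsum : ∑ j, w j = 0) (hvec : ∑ j, w j • X j = 0)
    (hpos : 2 * #(posIndices w) ≤ Fintype.card ι)
    (hneg : 2 * #(posIndices (-w)) ≤ Fintype.card ι) :
    ∃ A B : Finset ι, Disjoint A B ∧ A.Nonempty ∧ B.Nonempty ∧ #A = #B ∧
      (convexHull ℝ (X '' A) ∩ convexHull ℝ (X '' B)).Nonempty := by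
  classical
  wlog hle : #(posIndices w) ≤ #(posIndices (-w)) generalizing w
  · exact this (neg_ne_zero.2 hw) (by simp [hsum]) (by simp [hvec]) hneg (by rwa [neg_neg])
      (by rw [neg_neg]; omega)
  obtain ⟨p, hpP, hpN⟩ :=
    convexHull_posIndices_inter_convexHull_posIndices_neg_nonempty X hw hsum hvec
  obtain ⟨A, hPA, hAN, hcard⟩ :=
    exists_superset_disjoint_card_eq (disjoint_posIndices_neg w) hle hneg
  have hN : (posIndices (-w)).Nonempty := by
    simpa using Set.nonempty_of_mem hpN
  refine ⟨A, posIndices (-w), hAN, card_pos.1 (hcard ▸ hN.card_pos), hN, hcard, p, ?_, hpN⟩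
  exact convexHull_mono (Set.image_mono (coe_subset.2 hPA)) hpP

/-- Given `d+3` points in `ℝ^d`, there are two disjoint nonempty index sets of
the same size whose convex hulls intersect. -/
theorem equal_size_radon (d : ℕ) (X : Fin (d + 3) → (Fin d → ℝ)) :
    ∃ A B : Finset (Fin (d + 3)),
      Disjoint A B ∧ A.Nonempty ∧ B.Nonempty ∧ A.card = B.card ∧
      (convexHull ℝ (X '' ↑A) ∩ convexHull ℝ (X '' ↑B)).Nonempty := by
  set L := Fintype.linearCombination ℝ fun j => (X j, (1 : ℝ))
  have hK : 1 < Module.finrank ℝ (LinearMap.ker L) := by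
    have hrank := L.finrank_range_add_finrank_ker
    have hrange := Submodule.finrank_le (LinearMap.range L)
    simp only [Module.finrank_fin_fun, Module.finrank_prod, Module.finrank_self] at hrank hrange
    omega
  obtain ⟨w, hwL, hw, hpos, hneg⟩ := exists_mem_ne_zero_two_mul_card_posIndices_le _
    (Module.one_lt_rank_of_one_lt_finrank hK)
  simp only [L, LinearMap.mem_ker, Fintype.linearCombination_apply, Prod.smul_mk, smul_eq_mul,
    mul_one, Prod.ext_iff, Prod.fst_sum, Prod.snd_sum, Prod.fst_zero, Prod.snd_zero] at hwL
  exact exists_disjoint_card_eq_of_affine_dependency X hw hwL.2 hwL.1 hpos hneg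
end

section
/- Let k ≥ 2 and let u : Fin k → ℝ^{k-1} be vectors with the property that for every β : Fin k → ℝ one has ∑ i, β i • u i = 0 if and only if β is constant (this holds for the vertices of a regular simplex centred at the origin). Let z : Fin n → Fin t → ℝ^d be colour classes, σ : Fin n → (Fin k ↪ Fin t) a colourful k-partition, and α : Fin n → ℝ arbitrary coefficients. Define F j (σ j) = ∑ i, (u i) ⊗ (z j (σ j i)) in the tensor product ℝ^{k-1} ⊗ ℝ^d. Then the point ∑ j, α j • z j (σ j i) is independent of i ∈ Fin k if and only if ∑ j, α j • F j (σ j) = 0. -/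
open scoped TensorProduct

/-! Swapping the sums turns `∑ j, α j • F j (σ j)` into `∑ i, u i ⊗ w i` with
`w i = ∑ j, α j • z j (σ j i)`. Under `ℝ^{k-1} ⊗ ℝ^d ≃ (ℝ^{k-1})^d` this tensor vanishes iff
`∑ i, w i m • u i = 0` for every coordinate `m`, i.e. (by the hypothesis on `u`) iff every
coordinate of `w i` is independent of `i`. -/

theorem TensorProduct.sum_tmul_eq_zero_iff_forall_sum_smul_eq_zero
    {R M ι κ : Type*} [CommSemiring R] [AddCommMonoid M] [Module R M] [Fintype ι] [Finite κ]
    (v : ι → M) (w : ι → κ → R) :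
    ∑ i, v i ⊗ₜ[R] w i = 0 ↔ ∀ m, ∑ i, w i m • v i = 0 := by
  classical
  have := Fintype.ofFinite κ
  rw [← (piScalarRight R R M κ).map_eq_zero_iff, map_sum]
  simp only [piScalarRight_apply, piScalarRightHom_tmul, funext_iff, Finset.sum_apply,
    Pi.zero_apply]

theorem Finset.sum_smul_sum_tmul_eq_sum_tmul_sum
    {R M N ι κ : Type*} [CommSemiring R] [AddCommMonoid M] [Module R M] [AddCommMonoid N]
    [Module R N] (s : Finset κ) (t : Finset ι) (a : κ → R) (v : ι → M) (f : κ → ι → N) :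
    ∑ j ∈ s, a j • ∑ i ∈ t, v i ⊗ₜ[R] f j i = ∑ i ∈ t, v i ⊗ₜ[R] ∑ j ∈ s, a j • f j i := by
  simp only [Finset.smul_sum, ← TensorProduct.tmul_smul, TensorProduct.tmul_sum]
  exact Finset.sum_comm

theorem tensor_encoding_lemma_general (k d n t : ℕ)
    (u : Fin k → (Fin (k - 1) → ℝ))
    (hu : ∀ β : Fin k → ℝ, (∑ i, β i • u i = 0 ↔ ∀ i i', β i = β i'))
    (z : Fin n → Fin t → (Fin d → ℝ))
    (σ : Fin n → (Fin k ↪ Fin t)) (α : Fin n → ℝ) :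
    (∀ i i' : Fin k, ∑ j, α j • z j (σ j i) = ∑ j, α j • z j (σ j i')) ↔
      ∑ j, α j • (∑ i, u i ⊗ₜ[ℝ] z j (σ j i)) =
        (0 : (Fin (k - 1) → ℝ) ⊗[ℝ] (Fin d → ℝ)) := by
  rw [Finset.sum_smul_sum_tmul_eq_sum_tmul_sum,
    TensorProduct.sum_tmul_eq_zero_iff_forall_sum_smul_eq_zero]
  simp only [hu, funext_iff]
  exact ⟨fun h m i i' => h i i' m, fun h i i' m => h m i i'⟩

/-- Technical lemma: with `u` the vertices of a regular simplex in `ℝ^{k-1}`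
centred at the origin, a colourful `k`-partition intersects with coefficients
`α` if and only if `∑ j, α j • F j (σ j) = 0` in `ℝ^{k-1} ⊗ ℝ^d`, where
`F j (σ j) = ∑ i, u i ⊗ z j (σ j i)`. -/
theorem tensor_encoding_lemma (k d n t : ℕ) (hk : 2 ≤ k)
    (u : Fin k → (Fin (k - 1) → ℝ))
    (hu : ∀ β : Fin k → ℝ, (∑ i, β i • u i = 0 ↔ ∀ i i', β i = β i'))
    (z : Fin n → Fin t → (Fin d → ℝ))
    (σ : Fin n → (Fin k ↪ Fin t)) (α : Fin n → ℝ) :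
    (∀ i i' : Fin k, ∑ j, α j • z j (σ j i) = ∑ j, α j • z j (σ j i')) ↔
      ∑ j, α j • (∑ i, u i ⊗ₜ[ℝ] z j (σ j i)) =
        (0 : (Fin (k - 1) → ℝ) ⊗[ℝ] (Fin d → ℝ)) :=
  tensor_encoding_lemma_general k d n t u hu z σ α
end

section
/- Let k ≥ 2, d ≥ 1, t ≥ k, and let n be an integer with 1 ≤ n ≤ (k-1)d. Then the set of point configurations z : Fin n → Fin t → ℝ^d (identified with ℝ^{n·t·d} with Lebesgue measure) for which there exist σ : Fin n → (Fin k ↪ Fin t) and coefficients α : Fin n → ℝ with α j ≥ 0, ∑ j, α j = 1, and ∑ j, α j • z j (σ j i) independent of i ∈ Fin k, has Lebesgue measure zero. In particular, for random points whose distributions assign measure zero to every hyperplane, with probability 1 there is no colourful k-partition whose convex hulls intersect with equal coefficients. -/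
/-!
Fix the partition `σ` and a reference part `i₀`. For the `j`-th colour class, the coordinates
of the differences `z j (σ j i) - z j (σ j i₀)` (`i ≠ i₀`) form a vector of `ℝ^{(k-1)d}`;
keeping `n` of these coordinates gives a surjective linear image `w j ∈ ℝ^n` of `z j`.
Equal coefficients `α` give `∑ α j • w j = 0` with `α ≠ 0` (as `∑ α j = 1`), so the `n`
vectors `w j` of `ℝ^n` are linearly dependent. This is a null condition: by Fubini, a
Haar-random vector avoids the proper subspace spanned by fewer than `dim` others, and
surjective linear maps pull back null sets of Haar measures to null sets. There are only
finitely many `σ`.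
-/

open MeasureTheory Measure Set

section LinearIndependent

variable {F : Type*} [NormedAddCommGroup F] [NormedSpace ℝ F] [FiniteDimensional ℝ F]
  [MeasurableSpace F] [BorelSpace F]

theorem ae_linearIndependent_pi (μ : Measure F) [μ.IsAddHaarMeasure] :
    ∀ m ≤ Module.finrank ℝ F, ∀ᵐ v ∂Measure.pi (fun _ : Fin m => μ), LinearIndependent ℝ v
  | 0, _ => Filter.Eventually.of_forall fun _ => linearIndependent_empty_type
  | m + 1, hm => by
    set e := MeasurableEquiv.piFinSuccAbove (fun _ : Fin (m + 1) => F) 0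
    have he := (measurePreserving_piFinSuccAbove (fun _ : Fin (m + 1) => μ) 0).symm
    have hS :=
      (isOpen_setOfPred_linearIndependent (𝕜 := ℝ) (ι := Fin (m + 1)) (E := F)).measurableSet
    have hS' := he.measurable hS
    rw [← he.map_eq, ae_map_iff he.measurable.aemeasurable hS]
    refine (ae_prod_iff_ae_ae hS').2
      ((ae_ae_comm (p := fun x v => LinearIndependent ℝ (e.symm (x, v))) hS').2 ?_)
    filter_upwards [ae_linearIndependent_pi μ m (by omega)] with v hv
    have hne : Submodule.span ℝ (range v) ≠ ⊤ := fun h => by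
      have := finrank_le_of_span_eq_top h
      rw [Fintype.card_fin] at this
      omega
    filter_upwards [measure_eq_zero_iff_ae_notMem.1 (addHaar_submodule μ _ hne)] with x hx
    have hcons : e.symm (x, v) = Fin.cons x v := by simp [e]; rfl
    rw [hcons, linearIndependent_finCons]
    exact ⟨hv, hx⟩

theorem ae_linearIndependent_of_surjective {E : Type*} [NormedAddCommGroup E]
    [NormedSpace ℝ E] [FiniteDimensional ℝ E] [MeasurableSpace E] [BorelSpace E]
    (μ : Measure E) [μ.IsAddHaarMeasure] {m : ℕ} (hm : m ≤ Module.finrank ℝ F)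
    {L : E →ₗ[ℝ] Fin m → F} (hL : Function.Surjective L) :
    ∀ᵐ z ∂μ, LinearIndependent ℝ (L z) :=
  (ae_comp_linearMap_mem_iff L μ (Measure.pi fun _ => addHaar) hL
    isOpen_setOfPred_linearIndependent.measurableSet).2 (ae_linearIndependent_pi addHaar m hm)

end LinearIndependent

section CoordDiff

variable {R : Type*} [Ring R] {ι κ P Q X : Type*}

def coordDiffFrom (p₀ : P) (c : X → P × Q) : (P → Q → R) →ₗ[R] X → R where
  toFun x r := x (c r).1 (c r).2 - x p₀ (c r).2
  map_add' x y := by ext; simp only [Pi.add_apply]; abel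
  map_smul' a x := by ext; simp [mul_sub]

theorem coordDiffFrom_surjective {p₀ : P} {c : X → P × Q} (hc : Function.Injective c)
    (hp₀ : ∀ r, (c r).1 ≠ p₀) : Function.Surjective (coordDiffFrom (R := R) p₀ c) := by
  intro u
  refine ⟨fun p q => Function.extend c u 0 (p, q), funext fun r => ?_⟩
  have hnot : ¬∃ r', c r' = (p₀, (c r).2) := fun ⟨r', hr'⟩ => hp₀ r' (congrArg Prod.fst hr')
  simp [coordDiffFrom, hc.extend_apply, Function.extend_apply' _ _ _ hnot]

def colourfulCoordDiffs (i₀ : κ) (ρ : X → {i // i ≠ i₀} × Q) (σ : ι → (κ ↪ P)) :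
    (ι → P → Q → R) →ₗ[R] ι → X → R :=
  LinearMap.piMap fun j => coordDiffFrom (σ j i₀) fun r => (σ j (ρ r).1, (ρ r).2)

theorem colourfulCoordDiffs_surjective {i₀ : κ} {ρ : X → {i // i ≠ i₀} × Q}
    (hρ : Function.Injective ρ) (σ : ι → (κ ↪ P)) :
    Function.Surjective (colourfulCoordDiffs (R := R) i₀ ρ σ) := by
  refine Function.Surjective.piMap fun j => coordDiffFrom_surjective ?_ fun r h => (ρ r).1.2 ?_
  · intro r r' h
    simp only [Prod.mk.injEq, (σ j).injective.eq_iff] at h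
    exact hρ (Prod.ext (Subtype.ext h.1) h.2)
  · exact (σ j).injective h

theorem sum_smul_colourfulCoordDiffs_eq_zero [Fintype ι] {i₀ : κ} (ρ : X → {i // i ≠ i₀} × Q)
    {σ : ι → (κ ↪ P)} {z : ι → P → Q → R} {α : ι → R}
    (h : ∀ i i', ∑ j, α j • z j (σ j i) = ∑ j, α j • z j (σ j i')) :
    ∑ j, α j • colourfulCoordDiffs i₀ ρ σ z j = 0 := by
  ext r
  have hr := congrFun (h (ρ r).1 i₀) (ρ r).2
  simp only [Finset.sum_apply, Pi.smul_apply, smul_eq_mul] at hr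
  simp [colourfulCoordDiffs, coordDiffFrom, mul_sub, Finset.sum_sub_distrib, hr]

end CoordDiff

theorem equal_coefficients_partition_measure_zero_general (k d n t : ℕ)
    (hn2 : n ≤ (k - 1) * d) :
    volume {z : Fin n → Fin t → (Fin d → ℝ) |
      ∃ (σ : Fin n → (Fin k ↪ Fin t)) (α : Fin n → ℝ),
        (∀ j, 0 ≤ α j) ∧ (∑ j, α j = 1) ∧
        ∀ i i' : Fin k, ∑ j, α j • z j (σ j i) = ∑ j, α j • z j (σ j i')} = 0 := by
  rcases Nat.eq_zero_or_pos n with rfl | hn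
  · simp
  have hk : 0 < k := Nat.pos_of_ne_zero fun hk => by simp [hk] at hn2; omega
  let i₀ : Fin k := ⟨0, hk⟩
  obtain ⟨ρ⟩ : Nonempty (Fin n ↪ {i // i ≠ i₀} × Fin d) :=
    Function.Embedding.nonempty_of_card_le (by simpa [Fintype.card_subtype_compl] using hn2)
  -- instance search does not find Haar instances for nested products
  have : (volume : Measure (Fin t → Fin d → ℝ)).IsAddHaarMeasure := Measure.pi.isAddHaarMeasure _
  have : (volume : Measure (Fin n → Fin t → Fin d → ℝ)).IsAddHaarMeasure :=
    Measure.pi.isAddHaarMeasure _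
  refine measure_mono_null (fun z ⟨σ, α, _, hα, hz⟩ => mem_iUnion.2 ⟨σ, ?_⟩) <|
    measure_iUnion_null fun σ => ae_iff.1 <| ae_linearIndependent_of_surjective volume
      (Module.finrank_fin_fun ℝ).ge (colourfulCoordDiffs_surjective ρ.injective σ)
  obtain ⟨j, -, hj⟩ := Finset.exists_ne_zero_of_sum_ne_zero (hα.trans_ne one_ne_zero)
  exact Fintype.not_linearIndependent_iff.2 ⟨α, sum_smul_colourfulCoordDiffs_eq_zero ρ hz, j, hj⟩

/-- With `n ≤ (k-1)d` colour classes of `t ≥ k` points each, the set of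
configurations admitting a colourful `k`-partition whose convex hulls intersect
with equal coefficients has Lebesgue measure zero. -/
theorem equal_coefficients_partition_measure_zero (k d n t : ℕ)
    (hk : 2 ≤ k) (hd : 1 ≤ d) (hn1 : 1 ≤ n) (hn2 : n ≤ (k - 1) * d) (ht : k ≤ t) :
    volume {z : Fin n → Fin t → (Fin d → ℝ) |
      ∃ (σ : Fin n → (Fin k ↪ Fin t)) (α : Fin n → ℝ),
        (∀ j, 0 ≤ α j) ∧ (∑ j, α j = 1) ∧
        ∀ i i' : Fin k, ∑ j, α j • z j (σ j i) = ∑ j, α j • z j (σ j i')} = 0 :=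
  equal_coefficients_partition_measure_zero_general k d n t hn2
end
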